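/- arXiv:1909.09407 — 2 statements merged into one kernel-verified Lean document; each statement's English description precedes it below -/
import Mathlib

section
/- Every self-full co-ceer-resistant ceer is hereditarily self-full: if X is a self-full ceer such that for every Π⁰₁ equivalence relation C with infinitely many classes there exist x, y with x X y and ¬(x C y), then for every self-full ceer Y, the uniform join X ⊕ Y is self-full. -/
/-- `f` is a computable reduction from `R` to `S`. -/
def CReduction (f : ℕ → ℕ) (R S : ℕ → ℕ → Prop) : Prop :=
  Computable f ∧ ∀ x y, R x y ↔ S (f x) (f y)

/-- `R` is computably reducible to `S`. -/
def Reduces (R S : ℕ → ℕ → Prop) : Prop := ∃ f, CReduction f R S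

/-- A ceer: a computably enumerable equivalence relation on ℕ. -/
def Ceer (R : ℕ → ℕ → Prop) : Prop :=
  Equivalence R ∧ REPred fun p : ℕ × ℕ => R p.1 p.2

/-- `R` is self-full: every computable self-reduction has range meeting every class. -/
def SelfFull (R : ℕ → ℕ → Prop) : Prop :=
  ∀ f, CReduction f R R → ∀ y, ∃ x, R (f x) y

/-- Uniform join `R ⊕ S`: evens code `R`, odds code `S`. -/
def join (R S : ℕ → ℕ → Prop) : ℕ → ℕ → Prop :=
  fun a b => (∃ x y, a = 2*x ∧ b = 2*y ∧ R x y) ∨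
             (∃ x y, a = 2*x+1 ∧ b = 2*y+1 ∧ S x y)

/-- A Π⁰₁ relation: the complement is c.e. -/
def Pi01 (C : ℕ → ℕ → Prop) : Prop :=
  REPred fun p : ℕ × ℕ => ¬ C p.1 p.2

/-- `R` has infinitely many equivalence classes. -/
def InfiniteClasses (R : ℕ → ℕ → Prop) : Prop :=
  ∀ l : List ℕ, ∃ x, ∀ y ∈ l, ¬ R x y

/-- `R` has only finitely many equivalence classes. -/
def FiniteClasses (R : ℕ → ℕ → Prop) : Prop :=
  ∃ l : List ℕ, ∀ x, ∃ y ∈ l, R x y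

/-- `X` is co-ceer-resistant. -/
def CoCeerResistant (X : ℕ → ℕ → Prop) : Prop :=
  ∀ C : ℕ → ℕ → Prop, Equivalence C → Pi01 C → InfiniteClasses C →
    ∃ x y, X x y ∧ ¬ C x y

/-- `X` is hereditarily self-full. -/
def HSF (X : ℕ → ℕ → Prop) : Prop :=
  ∀ Y, Ceer Y → SelfFull Y → SelfFull (join X Y)

/-- `IdN n` is a ceer with exactly `n + 1` classes; so `IdN (n-1)` plays the role of `Idₙ` for `n ≥ 1`. -/
def IdN (n : ℕ) : ℕ → ℕ → Prop := fun x y => min x n = min y n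

/-- A universal ceer: every ceer reduces to it. -/
def Universal (U : ℕ → ℕ → Prop) : Prop := ∀ R, Ceer R → Reduces R U

/-- The Π⁰₁ equivalence relation `∼ᶠ` induced by a self-reduction `f` of a uniform join. -/
def simF (f : ℕ → ℕ) : ℕ → ℕ → Prop :=
  fun n m => ∀ k, (Even (f^[k] (2*n)) ↔ Even (f^[k] (2*m)))

/-- A sequence is eventually periodic. -/
def EventuallyPeriodic (τ : ℕ → Bool) : Prop :=
  ∃ N p, 0 < p ∧ ∀ k, N ≤ k → τ (k + p) = τ k

/-!
Let `f` be a computable self-reduction of `X ⊕ Y`. Since `f` preserves the parity of related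
points, `n ∼ m :↔ ∀ k, f^[k] (2n) and f^[k] (2m) have the same parity` is a Π⁰₁ equivalence
relation containing `X`, so co-ceer-resistance leaves it only finitely many classes. Hence the
parity sequences of the orbits of even points are finitely many shifts of each other, all
eventually periodic, and a single iterate `g = f^[Q]`, `Q > 0`, satisfies
`Even (g (2n)) ↔ Even (g (g (2n)))`.

For such `g`, moving an even point by `g` exactly when it stays even is a self-reduction of `X`,
so by self-fullness of `X` every class `2t` with `g (2t)` even is hit by `g`. This forces
`g (g a)` to be odd whenever `a` is odd and `g a` even, so `a ↦ g a` or `g (g a)`, whichever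
is odd, is a self-reduction of `Y`; self-fullness of `Y` then covers the odd classes and the
remaining even ones. Every class therefore meets the range of `g`, hence of `f`.
-/

theorem Computable.nat_iterate {α β : Type*} [Primcodable α] [Primcodable β] {n : α → ℕ}
    {x : α → β} {f : β → β} (hn : Computable n) (hx : Computable x) (hf : Computable f) :
    Computable fun a => f^[n a] (x a) :=
  (Computable.nat_rec hn hx (hf.comp (Computable.snd.comp Computable.snd)).to₂).of_eq fun a => by
    induction n a <;> simp [*, -Function.iterate_succ, Function.iterate_succ']

theorem Computable₂.rePred_exists {α : Type*} [Primcodable α] {p : α → ℕ → Bool}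
    (hp : Computable₂ p) : REPred fun a => ∃ n, p a n = true :=
  (Partrec.rfind hp.partrec₂).dom_re.of_eq fun a => by simp

theorem Computable.decide_even : Computable fun n : ℕ => decide (Even n) :=
  (Primrec.eq.decide.comp (Primrec.nat_mod.comp .id (.const 2)) (.const 0)).to_comp.of_eq
    fun n => by simp [Nat.even_iff]

theorem CReduction.iterate {f : ℕ → ℕ} {R : ℕ → ℕ → Prop} (hf : CReduction f R R) (k : ℕ) :
    CReduction f^[k] R R := by
  induction k with
  | zero => exact ⟨Computable.id, fun _ _ => Iff.rfl⟩
  | succ k ih =>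
    rw [Function.iterate_succ']
    exact ⟨hf.1.comp ih.1, fun x y => (ih.2 x y).trans (hf.2 _ _)⟩

section Join

variable {X Y : ℕ → ℕ → Prop} {a b n m : ℕ}

theorem join_two_mul_iff : join X Y (2 * n) (2 * m) ↔ X n m := by
  simp only [join]; constructor
  · rintro (⟨x, y, hx, hy, h⟩ | ⟨x, y, hx, hy, h⟩)
    · rwa [show n = x by omega, show m = y by omega]
    · omega
  · exact fun h => Or.inl ⟨n, m, rfl, rfl, h⟩

theorem join_two_mul_add_one_iff : join X Y (2 * n + 1) (2 * m + 1) ↔ Y n m := by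
  simp only [join]; constructor
  · rintro (⟨x, y, hx, hy, h⟩ | ⟨x, y, hx, hy, h⟩)
    · omega
    · rwa [show n = x by omega, show m = y by omega]
  · exact fun h => Or.inr ⟨n, m, rfl, rfl, h⟩

theorem join.even_iff (h : join X Y a b) : Even a ↔ Even b := by
  rcases h with ⟨x, y, rfl, rfl, -⟩ | ⟨x, y, rfl, rfl, -⟩ <;> simp

end Join

namespace EventuallyPeriodic

theorem of_finite_shifts {τ : ℕ → Bool} {S : Set (ℕ → Bool)} (hS : S.Finite)
    (hshift : ∀ e, τ e = true → (fun k => τ (k + e)) ∈ S) : EventuallyPeriodic τ := by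
  by_cases hinf : {e | τ e = true}.Infinite
  · obtain ⟨e, -, e', -, hlt, heq⟩ := hinf.exists_lt_map_eq_of_mapsTo hshift hS
    refine ⟨e, e' - e, by omega, fun k hk => ?_⟩
    have := congrFun heq (k - e)
    rw [show k + (e' - e) = k - e + e' by omega, ← this, Nat.sub_add_cancel hk]
  · obtain ⟨N, hN⟩ := (Set.not_infinite.1 hinf).bddAbove
    refine ⟨N + 1, 1, one_pos, fun k hk => ?_⟩
    have hfalse : ∀ j, N < j → τ j = false := fun j hj =>
      Bool.not_eq_true _ ▸ fun h => absurd (hN h) (by omega)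
    rw [hfalse k (by omega), hfalse (k + 1) (by omega)]

theorem exists_forall_add_self_eq {τ : ℕ → Bool} (hτ : EventuallyPeriodic τ) :
    ∃ q, 0 < q ∧ ∀ Q, 0 < Q → q ∣ Q → τ (Q + Q) = τ Q := by
  obtain ⟨N, p, hp, hper⟩ := hτ
  have hmul : ∀ c k, N ≤ k → τ (k + p * c) = τ k := by
    intro c
    induction c with
    | zero => simp
    | succ c ih => intro k hk; rw [mul_add_one, ← add_assoc, hper _ (by omega), ih k hk]
  refine ⟨p * (N + 1), by positivity, fun Q hQ ⟨c, hc⟩ => ?_⟩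
  have hc0 : 0 < c := Nat.pos_of_ne_zero (by rintro rfl; simp at hc; omega)
  have hNQ : N ≤ Q := by
    rw [hc, mul_comm p, mul_assoc]
    nlinarith [Nat.mul_pos hp hc0]
  rw [hc, mul_assoc, hmul _ _ (by rwa [← mul_assoc, ← hc])]

end EventuallyPeriodic

theorem Set.Finite.exists_forall_add_self_eq {S : Set (ℕ → Bool)} (hS : S.Finite)
    (hper : ∀ τ ∈ S, EventuallyPeriodic τ) : ∃ Q, 0 < Q ∧ ∀ τ ∈ S, τ (Q + Q) = τ Q := by
  choose! q hq_pos hq using fun τ hτ => (hper τ hτ).exists_forall_add_self_eq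
  have hprod_pos : 0 < ∏ τ ∈ hS.toFinset, q τ :=
    Finset.prod_pos fun τ hτ => hq_pos τ (hS.mem_toFinset.1 hτ)
  exact ⟨_, hprod_pos, fun τ hτ =>
    hq τ hτ _ hprod_pos (Finset.dvd_prod_of_mem q (hS.mem_toFinset.2 hτ))⟩

def parityTrace (f : ℕ → ℕ) (a : ℕ) : ℕ → Bool := fun k => decide (Even (f^[k] a))

section ParityTrace

variable {f : ℕ → ℕ}

theorem parityTrace_add (a k e : ℕ) : parityTrace f a (k + e) = parityTrace f (f^[e] a) k := by
  simp only [parityTrace, Function.iterate_add_apply]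

theorem Computable.parityTrace (hf : Computable f) :
    Computable₂ fun a k => _root_.parityTrace f a k :=
  Computable.decide_even.comp (.nat_iterate .snd .fst hf)

theorem simF_iff {n m : ℕ} : simF f n m ↔ parityTrace f (2 * n) = parityTrace f (2 * m) := by
  simp only [simF, funext_iff, parityTrace, decide_eq_decide]

theorem simF_equivalence : Equivalence (simF f) :=
  ⟨fun _ _ => Iff.rfl, fun h k => (h k).symm, fun h₁ h₂ k => (h₁ k).trans (h₂ k)⟩

theorem simF_pi01 (hf : Computable f) : Pi01 (simF f) := by
  have htrace (i : ℕ × ℕ → ℕ) (hi : Computable i) :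
      Computable fun q : (ℕ × ℕ) × ℕ => parityTrace f (2 * i q.1) q.2 :=
    hf.parityTrace.comp (Primrec.nat_mul.to_comp.comp (.const 2) (hi.comp .fst)) .snd
  have hne : Computable₂ fun (p : ℕ × ℕ) k =>
      !(parityTrace f (2 * p.1) k == parityTrace f (2 * p.2) k) :=
    Primrec.not.to_comp.comp <| Primrec.beq.to_comp.comp (htrace _ .fst) (htrace _ .snd)
  exact hne.rePred_exists.of_eq fun p => by simp [simF_iff, funext_iff]

theorem simF_of_rel {X Y : ℕ → ℕ → Prop} (hf : CReduction f (join X Y) (join X Y)) {n m : ℕ}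
    (h : X n m) : simF f n m := fun k =>
  join.even_iff (((hf.iterate k).2 _ _).1 (join_two_mul_iff.2 h))

end ParityTrace

theorem CoCeerResistant.exists_iterate_even_iff {X Y : ℕ → ℕ → Prop} (hccr : CoCeerResistant X)
    {f : ℕ → ℕ} (hf : CReduction f (join X Y) (join X Y)) :
    ∃ Q, 0 < Q ∧ ∀ n, Even (f^[Q] (2 * n)) ↔ Even (f^[Q] (f^[Q] (2 * n))) := by
  have hfin : ¬InfiniteClasses (simF f) := fun hinf =>
    let ⟨_, _, hxy, hn⟩ := hccr _ simF_equivalence (simF_pi01 hf.1) hinf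
    hn (simF_of_rel hf hxy)
  simp only [InfiniteClasses, not_forall, not_exists, not_not] at hfin
  obtain ⟨l, hl⟩ := hfin
  set S := Set.range fun n => parityTrace f (2 * n)
  have hS : S.Finite := by
    refine (l.finite_toSet.image fun y => parityTrace f (2 * y)).subset ?_
    rintro _ ⟨n, rfl⟩
    obtain ⟨y, hy, hny⟩ := hl n
    exact ⟨y, hy, (simF_iff.1 hny).symm⟩
  have hper : ∀ τ ∈ S, EventuallyPeriodic τ := by
    rintro _ ⟨n, rfl⟩
    refine .of_finite_shifts hS fun e he => ?_
    obtain ⟨m, hm⟩ : Even (f^[e] (2 * n)) := by simpa [parityTrace] using he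
    exact ⟨m, funext fun k => by beta_reduce; rw [parityTrace_add, hm, two_mul]⟩
  obtain ⟨Q, hQ, hQS⟩ := hS.exists_forall_add_self_eq hper
  refine ⟨Q, hQ, fun n => ?_⟩
  simpa [parityTrace, Function.iterate_add_apply] using (hQS _ ⟨n, rfl⟩).symm

theorem SelfFull.exists_rel_of_retract {S R : ℕ → ℕ → Prop} (hS : SelfFull S) {e d φ : ℕ → ℕ}
    (he : Computable e) (hd : Computable d) (hφ : Computable φ)
    (hSR : ∀ n m, S n m ↔ R (e n) (e m)) (hφe : ∀ n, e (d (φ (e n))) = φ (e n))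
    (hred : ∀ n m, R (e n) (e m) ↔ R (φ (e n)) (φ (e m))) (t : ℕ) :
    ∃ n, R (φ (e n)) (e t) := by
  obtain ⟨n, hn⟩ := hS (fun n => d (φ (e n)))
    ⟨hd.comp (hφ.comp he), fun n m => by rw [hSR, hSR, hφe, hφe, hred]⟩ t
  exact ⟨n, by rwa [hSR, hφe] at hn⟩

def advanceIfEven (g : ℕ → ℕ) (a : ℕ) : ℕ := if Even (g a) then g a else a

theorem Computable.advanceIfEven {g : ℕ → ℕ} (hg : Computable g) :
    Computable (_root_.advanceIfEven g) :=
  (Computable.cond (Computable.decide_even.comp hg) hg .id).of_eq fun a => by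
    by_cases h : Even (g a) <;> simp [_root_.advanceIfEven, h]

section SelfReduction

variable {X Y : ℕ → ℕ → Prop} {g : ℕ → ℕ}

theorem not_join_of_even_of_not_even {a b : ℕ}
    (hg : ∀ a b, join X Y a b ↔ join X Y (g a) (g b)) (hab : Even a ↔ Even b)
    (ha : Even (g (g a)) ↔ Even a) (hga : Even (g a)) (hgb : ¬Even (g b)) :
    ¬join X Y (g a) b ∧ ¬join X Y b (g a) ∧ ¬join X Y a b ∧ ¬join X Y b a := by
  refine ⟨fun h => ?_, fun h => ?_, fun h => ?_, fun h => ?_⟩ <;>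
    have h₁ := h.even_iff <;> have h₂ := ((hg _ _).1 h).even_iff <;> tauto

theorem join_advanceIfEven_iff {a b : ℕ} (hg : ∀ a b, join X Y a b ↔ join X Y (g a) (g b))
    (hab : Even a ↔ Even b) (ha : Even (g a) → (Even (g (g a)) ↔ Even a))
    (hb : Even (g b) → (Even (g (g b)) ↔ Even b)) :
    join X Y (advanceIfEven g a) (advanceIfEven g b) ↔ join X Y a b := by
  unfold advanceIfEven
  by_cases hga : Even (g a) <;> by_cases hgb : Even (g b) <;>
    simp only [hga, hgb, if_true, if_false]
  · exact (hg a b).symm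
  · have := not_join_of_even_of_not_even hg hab (ha hga) hga hgb
    exact iff_of_false this.1 this.2.2.1
  · have := not_join_of_even_of_not_even hg hab.symm (hb hgb) hgb hga
    exact iff_of_false this.2.1 this.2.2.2

theorem exists_join_two_mul_of_even (hsf : SelfFull X) (hg : CReduction g (join X Y) (join X Y))
    (hstab : ∀ n, Even (g (2 * n)) ↔ Even (g (g (2 * n)))) {t : ℕ} (ht : Even (g (2 * t))) :
    ∃ n, join X Y (g (2 * n)) (2 * t) := by
  have heven (n : ℕ) : Even (advanceIfEven g (2 * n)) := by
    unfold advanceIfEven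
    split_ifs with h
    exacts [h, even_two_mul n]
  have hstab' (n : ℕ) (h : Even (g (2 * n))) : Even (g (g (2 * n))) ↔ Even (2 * n) := by
    simp [← hstab, h]
  obtain ⟨n, hn⟩ := hsf.exists_rel_of_retract (e := (2 * ·)) (d := (· / 2))
    (Primrec.nat_mul.to_comp.comp (.const 2) .id) (Primrec.nat_div.to_comp.comp .id (.const 2))
    hg.1.advanceIfEven (fun _ _ => join_two_mul_iff.symm)
    (fun n => Nat.two_mul_div_two_of_even (heven n))
    (fun n m => (join_advanceIfEven_iff hg.2 (by simp) (hstab' n) (hstab' m)).symm) t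
  by_cases hgn : Even (g (2 * n))
  · exact ⟨n, by rwa [advanceIfEven, if_pos hgn] at hn⟩
  · rw [advanceIfEven, if_neg hgn] at hn
    exact absurd (((hg.2 _ _).1 hn).even_iff.2 ht) hgn

theorem not_even_apply_apply_of_not_even (hsf : SelfFull X)
    (hg : CReduction g (join X Y) (join X Y))
    (hstab : ∀ n, Even (g (2 * n)) ↔ Even (g (g (2 * n)))) {a : ℕ} (ha : ¬Even a)
    (hga : Even (g a)) : ¬Even (g (g a)) := by
  intro hgga
  obtain ⟨m, hm⟩ := hga
  obtain ⟨n, hn⟩ := exists_join_two_mul_of_even hsf hg hstab (t := m) (by rwa [two_mul, ← hm])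
  rw [two_mul m, ← hm] at hn
  exact ha (((hg.2 _ _).2 hn).even_iff.1 (even_two_mul n))

theorem exists_join_apply_advanceIfEven (hsfX : SelfFull X) (hsfY : SelfFull Y)
    (hg : CReduction g (join X Y) (join X Y))
    (hstab : ∀ n, Even (g (2 * n)) ↔ Even (g (g (2 * n)))) (t : ℕ) :
    ∃ n, join X Y (g (advanceIfEven g (2 * n + 1))) (2 * t + 1) := by
  have hodd (n : ℕ) : ¬Even (2 * n + 1) := by simp
  have hstab' (n : ℕ) (h : Even (g (2 * n + 1))) : Even (g (g (2 * n + 1))) ↔ Even (2 * n + 1) :=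
    iff_of_false (not_even_apply_apply_of_not_even hsfX hg hstab (hodd n) h) (hodd n)
  have hodd' (n : ℕ) : ¬Even (g (advanceIfEven g (2 * n + 1))) := by
    unfold advanceIfEven
    split_ifs with h
    exacts [not_even_apply_apply_of_not_even hsfX hg hstab (hodd n) h, h]
  exact hsfY.exists_rel_of_retract (e := (2 * · + 1)) (d := (· / 2))
    (Computable.succ.comp (Primrec.nat_mul.to_comp.comp (.const 2) .id))
    (Primrec.nat_div.to_comp.comp .id (.const 2)) (hg.1.comp hg.1.advanceIfEven)
    (fun _ _ => join_two_mul_add_one_iff.symm)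
    (fun n => Nat.two_mul_div_two_add_one_of_odd (Nat.not_even_iff_odd.1 (hodd' n)))
    (fun n m => (join_advanceIfEven_iff hg.2 (by simp) (hstab' n) (hstab' m)).symm.trans
      (hg.2 _ _)) t

theorem exists_join_apply_of_even_iff (hsfX : SelfFull X) (hsfY : SelfFull Y)
    (hg : CReduction g (join X Y) (join X Y))
    (hstab : ∀ n, Even (g (2 * n)) ↔ Even (g (g (2 * n)))) (b : ℕ) :
    ∃ a, join X Y (g a) b := by
  obtain ⟨t, rfl | rfl⟩ := Nat.even_or_odd' b
  · by_cases ht : Even (g (2 * t))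
    · obtain ⟨n, hn⟩ := exists_join_two_mul_of_even hsfX hg hstab ht
      exact ⟨_, hn⟩
    · obtain ⟨u, hu⟩ := Nat.not_even_iff_odd.1 ht
      obtain ⟨n, hn⟩ := exists_join_apply_advanceIfEven hsfX hsfY hg hstab u
      rw [← hu] at hn
      replace hn := (hg.2 _ _).2 hn
      unfold advanceIfEven at hn
      split_ifs at hn with h
      · exact ⟨_, hn⟩
      · exact absurd (hn.even_iff.2 (even_two_mul t)) (by simp)
  · obtain ⟨n, hn⟩ := exists_join_apply_advanceIfEven hsfX hsfY hg hstab t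
    exact ⟨_, hn⟩

end SelfReduction

theorem stmt5_general (X : ℕ → ℕ → Prop) (hsf : SelfFull X)
    (hccr : CoCeerResistant X) :
    ∀ Y : ℕ → ℕ → Prop, Ceer Y → SelfFull Y → SelfFull (join X Y) := by
  intro Y _ hsfY f hf b
  obtain ⟨Q, hQ, hstab⟩ := hccr.exists_iterate_even_iff hf
  obtain ⟨a, ha⟩ := exists_join_apply_of_even_iff hsf hsfY (hf.iterate Q) hstab b
  refine ⟨f^[Q - 1] a, ?_⟩
  rwa [← Function.iterate_succ_apply' f, Nat.succ_eq_add_one, Nat.sub_add_cancel hQ]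

/-- Every self-full co-ceer-resistant ceer is hereditarily self-full. -/
theorem stmt5 (X : ℕ → ℕ → Prop) (hX : Ceer X) (hsf : SelfFull X)
    (hccr : CoCeerResistant X) :
    ∀ Y : ℕ → ℕ → Prop, Ceer Y → SelfFull Y → SelfFull (join X Y) :=
  stmt5_general X hsf hccr
end

section
/- If F is a finite ceer (finitely many equivalence classes) and X is a self-full ceer, then F ⊕ X is self-full. -/
/-! Let `f` be a computable self-reduction of `F ⊕ X`, and `L` a bound such that among any
`L + 1` numbers two are `F`-equivalent. If the first `L + 1` points of an orbit are even, two of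
them are equivalent, and pulling this back along `f` makes the starting point equivalent to one of
its own later iterates. Hence an orbit leaving an odd point returns to the odd side within
`L + 1` steps, and the first-return map `n ↦ (first odd iterate of 2n+1) / 2` is a computable
self-reduction of `X`: related points have the same parity pattern along their orbits, so they
return at the same time. Self-fullness of `X` then puts every odd class in the range of `f`. An
even point `2y` either is equivalent to one of its later iterates, or first reaches the odd side
at some time `j`; a preimage of that odd class under the first-return map reaches it at a time
`i > j`, and pulling back `j` steps gives a preimage of the class of `2y`. -/

theorem join_mod_two_eq {F X : ℕ → ℕ → Prop} {a b : ℕ} (h : join F X a b) :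
    a % 2 = b % 2 := by
  rcases h with ⟨x, y, rfl, rfl, _⟩ | ⟨x, y, rfl, rfl, _⟩ <;> omega

theorem join_two_mul_iff_s10 {F X : ℕ → ℕ → Prop} {x y : ℕ} :
    join F X (2 * x) (2 * y) ↔ F x y := by
  constructor
  · rintro (⟨x', y', hx, hy, h⟩ | ⟨_, _, hx, _, _⟩)
    · obtain rfl : x = x' := by omega
      obtain rfl : y = y' := by omega
      exact h
    · omega
  · exact fun h => Or.inl ⟨x, y, rfl, rfl, h⟩

theorem join_two_mul_add_one_iff_s10 {F X : ℕ → ℕ → Prop} {x y : ℕ} :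
    join F X (2 * x + 1) (2 * y + 1) ↔ X x y := by
  constructor
  · rintro (⟨_, _, hx, _, _⟩ | ⟨x', y', hx, hy, h⟩)
    · omega
    · obtain rfl : x = x' := by omega
      obtain rfl : y = y' := by omega
      exact h
  · exact fun h => Or.inr ⟨x, y, rfl, rfl, h⟩

def RepeatsWithin (F : ℕ → ℕ → Prop) (L : ℕ) : Prop :=
  ∀ v : ℕ → ℕ, ∃ i j, i < j ∧ j ≤ L ∧ F (v i) (v j)

theorem FiniteClasses.exists_repeatsWithin {F : ℕ → ℕ → Prop} (hF : Equivalence F)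
    (h : FiniteClasses F) : ∃ L, RepeatsWithin F L := by
  obtain ⟨l, hl⟩ := h
  choose r hr hFr using hl
  refine ⟨l.length, fun v => ?_⟩
  have hmaps : Set.MapsTo (r ∘ v) (Finset.range (l.length + 1)) l.toFinset :=
    fun i _ => List.mem_toFinset.2 (hr _)
  have hcard : l.toFinset.card < (Finset.range (l.length + 1)).card := by
    simpa [Nat.lt_succ_iff] using l.toFinset_card_le
  obtain ⟨i, hi, j, hj, hne, hij⟩ := Finset.exists_ne_map_eq_of_card_lt_of_maps_to hcard hmaps
  have hrel : ∀ i j, r (v i) = r (v j) → F (v i) (v j) := fun i j e =>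
    hF.trans (hFr _) (e ▸ hF.symm (hFr _))
  simp only [Finset.mem_range] at hi hj
  rcases hne.lt_or_gt with h | h
  · exact ⟨i, j, h, by omega, hrel i j hij⟩
  · exact ⟨j, i, h, by omega, hrel j i hij.symm⟩

theorem Computable.iterate {α : Type*} [Primcodable α] {g : α → α} (hg : Computable g) :
    ∀ m, Computable g^[m]
  | 0 => Computable.id
  | m + 1 => (hg.iterate m).comp hg

section Iterate

variable {J : ℕ → ℕ → Prop} {f : ℕ → ℕ}

theorem rel_iterate_iff (hf : ∀ x y, J x y ↔ J (f x) (f y)) (k : ℕ) {a b : ℕ} :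
    J (f^[k] a) (f^[k] b) ↔ J a b := by
  induction k generalizing a b with
  | zero => rfl
  | succ k ih => exact ih.trans (hf a b).symm

theorem exists_rel_apply_of_rel_iterate {a c k : ℕ} (hk : 0 < k) (h : J (f^[k] a) c) :
    ∃ x, J (f x) c := by
  obtain ⟨k, rfl⟩ := Nat.exists_eq_add_of_lt hk
  exact ⟨f^[k] a, by rwa [zero_add, Function.iterate_succ_apply'] at h⟩

def IsFirstOddIterate (f : ℕ → ℕ) (a k : ℕ) : Prop :=
  0 < k ∧ f^[k] a % 2 = 1 ∧ ∀ j, 0 < j → j < k → f^[j] a % 2 = 0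

theorem exists_isFirstOddIterate {a : ℕ} (h : ∃ k, 0 < k ∧ f^[k] a % 2 = 1) :
    ∃ k, IsFirstOddIterate f a k := by
  obtain ⟨hpos, hodd⟩ := Nat.find_spec h
  refine ⟨Nat.find h, hpos, hodd, fun j hj hjk => ?_⟩
  have := Nat.find_min h hjk
  omega

theorem IsFirstOddIterate.eq_of_rel (hf : ∀ x y, J x y ↔ J (f x) (f y))
    (hpar : ∀ x y, J x y → x % 2 = y % 2) {a b k k' : ℕ} (h : J a b)
    (ha : IsFirstOddIterate f a k) (hb : IsFirstOddIterate f b k') : k = k' := by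
  have hsame : ∀ j, f^[j] a % 2 = f^[j] b % 2 := fun j => hpar _ _ ((rel_iterate_iff hf j).2 h)
  obtain ⟨hk, hak, hamin⟩ := ha
  obtain ⟨hk', hbk, hbmin⟩ := hb
  rcases lt_trichotomy k k' with hlt | heq | hgt
  · have := hbmin k hk hlt
    have := hsame k
    omega
  · exact heq
  · have := hamin k' hk' hgt
    have := hsame k'
    omega

theorem le_of_rel_iterate (hf : ∀ x y, J x y ↔ J (f x) (f y))
    (hpar : ∀ x y, J x y → x % 2 = y % 2) {a b i j : ℕ} (hi : 0 < i) (ha : a % 2 = 1)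
    (hb : ∀ k, 0 < k → k < j → f^[k] b % 2 = 0) (h : J (f^[i] a) (f^[j] b)) : j ≤ i := by
  by_contra! hij
  obtain ⟨d, rfl⟩ := Nat.exists_eq_add_of_lt hij
  rw [add_assoc, Function.iterate_add_apply, rel_iterate_iff hf] at h
  have := hb (d + 1) (by omega) (by omega)
  have := hpar _ _ h
  omega

def stepUntilOdd (f : ℕ → ℕ) (a : ℕ) : ℕ := if a % 2 = 1 then a else f a

theorem iterate_stepUntilOdd {a k m : ℕ} (hkm : k ≤ m) (hodd : f^[k] a % 2 = 1)
    (heven : ∀ j < k, f^[j] a % 2 = 0) : (stepUntilOdd f)^[m] a = f^[k] a := by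
  have hagree : ∀ j ≤ k, (stepUntilOdd f)^[j] a = f^[j] a := by
    intro j hj
    induction j with
    | zero => rfl
    | succ j ih =>
      have := heven j (by omega)
      rw [Function.iterate_succ_apply', Function.iterate_succ_apply', ih (by omega),
        stepUntilOdd, if_neg (by omega)]
  obtain ⟨d, rfl⟩ := Nat.exists_eq_add_of_le hkm
  rw [add_comm, Function.iterate_add_apply, hagree k le_rfl]
  exact Function.iterate_fixed (by rw [stepUntilOdd, if_pos hodd]) d

theorem Computable.stepUntilOdd (hf : Computable f) : Computable (stepUntilOdd f) := by
  have hodd : Computable fun a : ℕ => decide (a % 2 = 1) :=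
    (PrimrecRel.comp Primrec.eq (Primrec.nat_mod.comp .id (.const 2)) (.const 1)).decide.to_comp
  exact (Computable.cond hodd .id hf).of_eq fun a => by
    simp only [_root_.stepUntilOdd, Bool.cond_decide, id]

end Iterate

-- `stepUntilOdd f` freezes at odd points, and by `exists_odd_iterate_le` the orbit of
-- `f (2 * n + 1)` turns odd within `L` steps.
def oddReturnMap (f : ℕ → ℕ) (L n : ℕ) : ℕ := (stepUntilOdd f)^[L] (f (2 * n + 1)) / 2

theorem Computable.oddReturnMap {f : ℕ → ℕ} (hf : Computable f) (L : ℕ) :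
    Computable (oddReturnMap f L) :=
  (Primrec.nat_div.comp .id (.const 2)).to_comp.comp
    ((hf.stepUntilOdd.iterate L).comp (hf.comp Primrec.nat_double_succ.to_comp))

section JoinSelfReduction

variable {F X : ℕ → ℕ → Prop} {f : ℕ → ℕ} {L : ℕ}

theorem exists_rel_iterate_self_of_even (hF : Equivalence F) (hL : RepeatsWithin F L)
    (hf : ∀ x y, join F X x y ↔ join F X (f x) (f y)) {a : ℕ}
    (heven : ∀ k ≤ L, f^[k] a % 2 = 0) : ∃ d < L, join F X (f^[d + 1] a) a := by
  obtain ⟨i, j, hij, hjL, hv⟩ := hL fun k => f^[k] a / 2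
  have hhalf : ∀ k ≤ L, 2 * (f^[k] a / 2) = f^[k] a := fun k hk => by
    have := heven k hk
    omega
  have h : join F X (f^[j] a) (f^[i] a) := by
    rw [← hhalf j hjL, ← hhalf i (by omega)]
    exact join_two_mul_iff_s10.2 (hF.symm hv)
  obtain ⟨d, rfl⟩ := Nat.exists_eq_add_of_lt hij
  rw [add_assoc, Function.iterate_add_apply, rel_iterate_iff hf] at h
  exact ⟨d, by omega, h⟩

theorem exists_odd_iterate_le (hF : Equivalence F) (hL : RepeatsWithin F L)
    (hf : ∀ x y, join F X x y ↔ join F X (f x) (f y)) {a : ℕ} (ha : a % 2 = 1) :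
    ∃ k, 0 < k ∧ k ≤ L + 1 ∧ f^[k] a % 2 = 1 := by
  by_contra! hcon
  obtain ⟨d, hd, h⟩ := exists_rel_iterate_self_of_even hF hL hf (a := f a) fun k hk => by
    have := hcon (k + 1) (by omega) (by omega)
    rw [Function.iterate_succ_apply] at this
    omega
  rw [← Function.iterate_succ_apply, Function.iterate_succ_apply', ← hf] at h
  have := join_mod_two_eq h
  have := hcon (d + 1) (by omega) (by omega)
  omega

theorem oddReturnMap_spec (hF : Equivalence F) (hL : RepeatsWithin F L)
    (hf : ∀ x y, join F X x y ↔ join F X (f x) (f y)) (n : ℕ) :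
    ∃ k, IsFirstOddIterate f (2 * n + 1) k ∧
      f^[k] (2 * n + 1) = 2 * oddReturnMap f L n + 1 := by
  obtain ⟨k₀, hk₀, hk₀L, hk₀odd⟩ :=
    exists_odd_iterate_le hF hL hf (a := 2 * n + 1) (by omega)
  obtain ⟨k, hk, hkodd, hkmin⟩ := exists_isFirstOddIterate ⟨k₀, hk₀, hk₀odd⟩
  obtain ⟨k, rfl⟩ : ∃ k', k = k' + 1 := ⟨k - 1, by omega⟩
  have hkL : k ≤ L := by
    by_contra!
    have := hkmin k₀ hk₀ (by omega)
    omega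
  have hstep : (stepUntilOdd f)^[L] (f (2 * n + 1)) = f^[k + 1] (2 * n + 1) :=
    iterate_stepUntilOdd hkL hkodd fun j hj => hkmin (j + 1) (by omega) (by omega)
  refine ⟨k + 1, ⟨hk, hkodd, hkmin⟩, ?_⟩
  rw [oddReturnMap, hstep]
  omega

theorem oddReturnMap_rel_iff (hF : Equivalence F) (hL : RepeatsWithin F L)
    (hf : ∀ x y, join F X x y ↔ join F X (f x) (f y)) (n m : ℕ) :
    X n m ↔ X (oddReturnMap f L n) (oddReturnMap f L m) := by
  obtain ⟨k, hk, hkn⟩ := oddReturnMap_spec hF hL hf n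
  obtain ⟨k', hk', hkm⟩ := oddReturnMap_spec hF hL hf m
  rw [← join_two_mul_add_one_iff_s10 (F := F) (X := X),
    ← join_two_mul_add_one_iff_s10 (F := F) (X := X), ← hkn, ← hkm]
  constructor
  · intro h
    obtain rfl := hk.eq_of_rel hf (fun _ _ => join_mod_two_eq) h hk'
    exact (rel_iterate_iff hf k).2 h
  · intro h
    have hle : k' ≤ k :=
      le_of_rel_iterate hf (fun _ _ => join_mod_two_eq) hk.1 (by omega) hk'.2.2 h
    have hge : k ≤ k' := le_of_rel_iterate (J := flip (join F X)) (fun x y => hf y x)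
      (fun _ _ h => (join_mod_two_eq h).symm) hk'.1 (by omega) hk.2.2 h
    obtain rfl := le_antisymm hge hle
    exact (rel_iterate_iff hf k).1 h

theorem exists_rel_apply_two_mul (hF : Equivalence F) (hL : RepeatsWithin F L)
    (hf : ∀ x y, join F X x y ↔ join F X (f x) (f y))
    (hX : ∀ y, ∃ n, X (oddReturnMap f L n) y) (y : ℕ) : ∃ x, join F X (f x) (2 * y) := by
  by_cases hodd : ∃ k, 0 < k ∧ f^[k] (2 * y) % 2 = 1
  · obtain ⟨j, -, hjodd, hjmin⟩ := exists_isFirstOddIterate hodd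
    obtain ⟨n, hn⟩ := hX (f^[j] (2 * y) / 2)
    obtain ⟨i, hi, hin⟩ := oddReturnMap_spec hF hL hf n
    have h : join F X (f^[i] (2 * n + 1)) (f^[j] (2 * y)) := by
      rw [hin, show f^[j] (2 * y) = 2 * (f^[j] (2 * y) / 2) + 1 by omega]
      exact join_two_mul_add_one_iff_s10.2 hn
    have hji : j ≤ i :=
      le_of_rel_iterate hf (fun _ _ => join_mod_two_eq) hi.1 (by omega) hjmin h
    obtain ⟨d, rfl⟩ := Nat.exists_eq_add_of_le hji
    rw [Function.iterate_add_apply, rel_iterate_iff hf] at h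
    rcases Nat.eq_zero_or_pos d with rfl | hd
    · have := join_mod_two_eq h
      rw [Function.iterate_zero_apply] at this
      omega
    · exact exists_rel_apply_of_rel_iterate hd h
  · push Not at hodd
    obtain ⟨d, -, h⟩ := exists_rel_iterate_self_of_even hF hL hf (a := 2 * y) fun k _ => by
      rcases k with _ | k
      · simp
      · have := hodd (k + 1) (by omega)
        omega
    exact exists_rel_apply_of_rel_iterate d.succ_pos h

end JoinSelfReduction

theorem stmt10_general (F X : ℕ → ℕ → Prop) (hF : Ceer F) (hFfin : FiniteClasses F)
    (hsf : SelfFull X) :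
    SelfFull (join F X) := by
  obtain ⟨L, hL⟩ := hFfin.exists_repeatsWithin hF.1
  rintro f ⟨hfc, hf⟩ b
  have hX : ∀ y, ∃ n, X (oddReturnMap f L n) y :=
    hsf _ ⟨hfc.oddReturnMap L, oddReturnMap_rel_iff hF.1 hL hf⟩
  obtain ⟨y, rfl | rfl⟩ := Nat.even_or_odd' b
  · exact exists_rel_apply_two_mul hF.1 hL hf hX y
  · obtain ⟨n, hn⟩ := hX y
    obtain ⟨k, hk, hkn⟩ := oddReturnMap_spec hF.1 hL hf n
    exact exists_rel_apply_of_rel_iterate hk.1 (hkn ▸ join_two_mul_add_one_iff_s10.2 hn)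

/-- If `F` is a finite ceer and `X` is self-full, then `F ⊕ X` is self-full. -/
theorem stmt10 (F X : ℕ → ℕ → Prop) (hF : Ceer F) (hFfin : FiniteClasses F)
    (hX : Ceer X) (hsf : SelfFull X) :
    SelfFull (join F X) :=
  stmt10_general F X hF hFfin hsf
end
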